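/- arXiv:1105.0231 — 4 statements merged into one kernel-verified Lean document; each statement's English description precedes it below -/
import Mathlib

section
/- At every point of U, the backward characteristic derivative of the pressure satisfies p_t − c·p_x = −c²·(u_x + m·z_x + ((γ−1)/γ)·m_x·z); equivalently, α = −(p_t − c·p_x)/c² (Lemma 4.1, forward part). -/
open Real

/-- Partial derivative with respect to `t` (the first coordinate). -/
noncomputable def pdt (f : ℝ × ℝ → ℝ) (pt : ℝ × ℝ) : ℝ := fderiv ℝ f pt (1, 0)

/-- Partial derivative with respect to `x` (the second coordinate). -/
noncomputable def pdx (f : ℝ × ℝ → ℝ) (pt : ℝ × ℝ) : ℝ := fderiv ℝ f pt (0, 1)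

/-!
Since `K_p · 2γ/(γ-1) = K_c` and `z^(2γ/(γ-1)) = z^((γ+1)/(γ-1)) · z`, the chain rule gives
`dp = c (m dz + ((γ-1)/γ) z dm)`. In `p_t - c p_x`, the equation `m_t = 0` removes `m_t`, and
`z_t = -(c/m) u_x` turns `c m z_t` into `-c² u_x`; what remains is `-c² α`.
-/

theorem hasFDerivAt_const_mul_sq_mul_rpow {E : Type*} [NormedAddCommGroup E] [NormedSpace ℝ E]
    {m z : E → ℝ} {x : E} (hm : DifferentiableAt ℝ m x) (hz : DifferentiableAt ℝ z x)
    (hz0 : z x ≠ 0) (K e : ℝ) :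
    HasFDerivAt (fun q => K * m q ^ 2 * z q ^ e)
      ((K * e * m x ^ 2 * z x ^ (e - 1)) • fderiv ℝ z x + (2 * K * m x * z x ^ e) • fderiv ℝ m x)
      x := by
  refine (((hm.hasFDerivAt.pow 2).const_mul K).mul
    (hz.hasFDerivAt.rpow_const (p := e) (Or.inl hz0))).congr_fderiv ?_
  ext v
  simp only [add_apply, smul_apply, smul_eq_mul, nsmul_eq_mul]
  push_cast
  ring

theorem fderiv_pressure_apply {E : Type*} [NormedAddCommGroup E] [NormedSpace ℝ E]
    {γ : ℝ} (hγ : 1 < γ) (Kc : ℝ) {m z : E → ℝ} {x : E} (hm : DifferentiableAt ℝ m x)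
    (hz : DifferentiableAt ℝ z x) (hz0 : 0 < z x) (v : E) :
    fderiv ℝ (fun q => (γ - 1) / (2 * γ) * Kc * m q ^ 2 * z q ^ (2 * γ / (γ - 1))) x v =
      Kc * m x * z x ^ ((γ + 1) / (γ - 1)) *
        (m x * fderiv ℝ z x v + (γ - 1) / γ * z x * fderiv ℝ m x v) := by
  have hγ0 : γ ≠ 0 := by linarith
  have hγ1 : γ - 1 ≠ 0 := by linarith
  have hexp : 2 * γ / (γ - 1) - 1 = (γ + 1) / (γ - 1) := by field_simp; ring
  have hze : z x ^ (2 * γ / (γ - 1)) = z x ^ ((γ + 1) / (γ - 1)) * z x := by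
    rw [← rpow_add_one hz0.ne', ← hexp, sub_add_cancel]
  rw [(hasFDerivAt_const_mul_sq_mul_rpow hm hz hz0.ne' _ _).fderiv]
  simp only [add_apply, smul_apply, smul_eq_mul]
  rw [hexp, hze]
  field_simp

theorem stmt_0_general (γ Kc : ℝ) (hγ : 1 < γ)
    (U : Set (ℝ × ℝ)) (hU : IsOpen U)
    (u z m : ℝ × ℝ → ℝ)
    (hz : ContDiffOn ℝ 2 z U) (hm : ContDiffOn ℝ 2 m U)
    (hzpos : ∀ pt ∈ U, 0 < z pt) (hmpos : ∀ pt ∈ U, 0 < m pt)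
    (c p : ℝ × ℝ → ℝ)
    (hc : c = fun pt => Kc * m pt * z pt ^ ((γ + 1) / (γ - 1)))
    (hp : p = fun pt => ((γ - 1) / (2 * γ) * Kc) * (m pt) ^ 2 * z pt ^ (2 * γ / (γ - 1)))
    (heq1 : ∀ pt ∈ U, pdt z pt + (c pt / m pt) * pdx u pt = 0)
    (heq3 : ∀ pt ∈ U, pdt m pt = 0)
    (α : ℝ × ℝ → ℝ)
    (hα : α = fun pt => pdx u pt + m pt * pdx z pt + ((γ - 1) / γ) * pdx m pt * z pt) :
    ∀ pt ∈ U, pdt p pt - c pt * pdx p pt = -(c pt) ^ 2 * α pt := by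
  intro pt hpt
  have hnhds := hU.mem_nhds hpt
  have hdp := fderiv_pressure_apply hγ Kc
    ((hm.differentiableOn two_ne_zero).differentiableAt hnhds)
    ((hz.differentiableOn two_ne_zero).differentiableAt hnhds) (hzpos pt hpt)
  have hzt : pdt z pt = -(c pt / m pt) * pdx u pt := by linear_combination heq1 pt hpt
  have hmt := heq3 pt hpt
  subst hp hc hα
  simp only [pdt, pdx, hdp] at hzt hmt ⊢
  rw [hzt, hmt]
  field_simp [(hmpos pt hpt).ne']
  ring

/-- Lemma 4.1 (forward part): `p‵ = p_t − c·p_x = −c²·α` on `U`. -/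
theorem stmt_0 (γ Kc : ℝ) (hγ : 1 < γ) (hKc : 0 < Kc)
    (U : Set (ℝ × ℝ)) (hU : IsOpen U)
    (u z m : ℝ × ℝ → ℝ)
    (hu : ContDiffOn ℝ 2 u U) (hz : ContDiffOn ℝ 2 z U) (hm : ContDiffOn ℝ 2 m U)
    (hzpos : ∀ pt ∈ U, 0 < z pt) (hmpos : ∀ pt ∈ U, 0 < m pt)
    (c p : ℝ × ℝ → ℝ)
    (hc : c = fun pt => Kc * m pt * z pt ^ ((γ + 1) / (γ - 1)))
    (hp : p = fun pt => ((γ - 1) / (2 * γ) * Kc) * (m pt) ^ 2 * z pt ^ (2 * γ / (γ - 1)))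
    (heq1 : ∀ pt ∈ U, pdt z pt + (c pt / m pt) * pdx u pt = 0)
    (heq2 : ∀ pt ∈ U, pdt u pt + m pt * c pt * pdx z pt + 2 * (p pt / m pt) * pdx m pt = 0)
    (heq3 : ∀ pt ∈ U, pdt m pt = 0)
    (α : ℝ × ℝ → ℝ)
    (hα : α = fun pt => pdx u pt + m pt * pdx z pt + ((γ - 1) / γ) * pdx m pt * z pt) :
    ∀ pt ∈ U, pdt p pt - c pt * pdx p pt = -(c pt) ^ 2 * α pt :=
  stmt_0_general γ Kc hγ U hU u z m hz hm hzpos hmpos c p hc hp heq1 heq3 α hα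
end

section
/- At every point of U, α satisfies the Riccati-type equation along forward characteristics: α_t + c·α_x = k₁·( k₂·(3α + β) + α·β − α² ) (Theorem 1.1, equation for α). -/
/-!
Since `m` does not depend on `t` and mixed partials commute,
`α_t = u_xt + m z_xt + ((γ-1)/γ) m_x z_t`. Differentiating the first two equations of the system
in `x` expresses `z_xt` and `u_xt` through `x`-derivatives alone. After substituting, and writing
`z^((γ+1)/(γ-1)) = z^(2/(γ-1)) z` and `z^(2γ/(γ-1)) = z^(2/(γ-1)) z²`, the claim is an identity
of rational functions.
-/

open Real

section SecondDerivatives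

variable {E : Type*} [NormedAddCommGroup E] [NormedSpace ℝ E] {f : E → ℝ} {x : E}

theorem ContDiffAt.differentiableAt_fderiv_apply (hf : ContDiffAt ℝ 2 f x) (v : E) :
    DifferentiableAt ℝ (fun y => fderiv ℝ f y v) x :=
  ((hf.fderiv_right (m := 1) (by norm_num)).differentiableAt one_ne_zero).clm_apply
    (differentiableAt_const v)

theorem ContDiffAt.fderiv_fderiv_apply_comm (hf : ContDiffAt ℝ 2 f x) (v w : E) :
    fderiv ℝ (fun y => fderiv ℝ f y v) x w = fderiv ℝ (fun y => fderiv ℝ f y w) x v := by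
  have hd := (hf.fderiv_right (m := 1) (by norm_num)).differentiableAt one_ne_zero
  rw [fderiv_clm_apply hd (differentiableAt_const v),
    fderiv_clm_apply hd (differentiableAt_const w)]
  simpa using hf.isSymmSndFDerivAt (by simp [minSmoothness_of_isRCLikeNormedField]) w v

end SecondDerivatives

theorem fderiv_eq_zero_of_forall_mem_eq_zero {E F : Type*} [NormedAddCommGroup E]
    [NormedSpace ℝ E] [NormedAddCommGroup F] [NormedSpace ℝ F] {f : E → F} {U : Set E} {x : E}
    (hU : IsOpen U) (hx : x ∈ U) (h : ∀ y ∈ U, f y = 0) : fderiv ℝ f x = 0 := by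
  have hf : f =ᶠ[nhds x] fun _ => 0 := Filter.eventually_of_mem (hU.mem_nhds hx) h
  rw [hf.fderiv_eq, fderiv_const_apply]

theorem pdt_pdx_comm {f : ℝ × ℝ → ℝ} {pt : ℝ × ℝ} (hf : ContDiffAt ℝ 2 f pt) :
    pdt (pdx f) pt = pdx (pdt f) pt :=
  hf.fderiv_fderiv_apply_comm _ _

section EulerSystem

variable {u z m : ℝ × ℝ → ℝ} {pt : ℝ × ℝ}

theorem fderiv_pdx_add_mul_pdx_add_mul_pdx_mul_apply (a : ℝ) (hu : ContDiffAt ℝ 2 u pt)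
    (hz : ContDiffAt ℝ 2 z pt) (hm : ContDiffAt ℝ 2 m pt) (v : ℝ × ℝ) :
    fderiv ℝ (fun q => pdx u q + m q * pdx z q + a * pdx m q * z q) pt v
      = fderiv ℝ (pdx u) pt v + fderiv ℝ m pt v * pdx z pt + m pt * fderiv ℝ (pdx z) pt v
        + a * (fderiv ℝ (pdx m) pt v * z pt + pdx m pt * fderiv ℝ z pt v) := by
  have hux : DifferentiableAt ℝ (pdx u) pt := hu.differentiableAt_fderiv_apply _
  have hzx : DifferentiableAt ℝ (pdx z) pt := hz.differentiableAt_fderiv_apply _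
  have hmx : DifferentiableAt ℝ (pdx m) pt := hm.differentiableAt_fderiv_apply _
  have hasDeriv : HasFDerivAt (fun q => pdx u q + m q * pdx z q + a * pdx m q * z q) _ pt :=
    (hux.hasFDerivAt.add ((hm.differentiableAt two_ne_zero).hasFDerivAt.mul hzx.hasFDerivAt)).add
      ((hmx.hasFDerivAt.const_mul a).mul (hz.differentiableAt two_ne_zero).hasFDerivAt)
  rw [hasDeriv.fderiv]
  simp only [add_apply, smul_apply, smul_eq_mul]
  ring

theorem pdt_pdx_add_mul_pdx_add_mul_pdx_mul (a : ℝ) (hu : ContDiffAt ℝ 2 u pt)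
    (hz : ContDiffAt ℝ 2 z pt) (hm : ContDiffAt ℝ 2 m pt) :
    pdt (fun q => pdx u q + m q * pdx z q + a * pdx m q * z q) pt
      = pdt (pdx u) pt + pdt m pt * pdx z pt + m pt * pdt (pdx z) pt
        + a * (pdt (pdx m) pt * z pt + pdx m pt * pdt z pt) :=
  fderiv_pdx_add_mul_pdx_add_mul_pdx_mul_apply a hu hz hm _

theorem pdx_pdx_add_mul_pdx_add_mul_pdx_mul (a : ℝ) (hu : ContDiffAt ℝ 2 u pt)
    (hz : ContDiffAt ℝ 2 z pt) (hm : ContDiffAt ℝ 2 m pt) :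
    pdx (fun q => pdx u q + m q * pdx z q + a * pdx m q * z q) pt
      = pdx (pdx u) pt + pdx m pt * pdx z pt + m pt * pdx (pdx z) pt
        + a * (pdx (pdx m) pt * z pt + pdx m pt * pdx z pt) :=
  fderiv_pdx_add_mul_pdx_add_mul_pdx_mul_apply a hu hz hm _

variable {U : Set (ℝ × ℝ)}

theorem pdx_pdt_eq_of_forall_pdt_add_mul_rpow_mul_pdx_eq_zero (hU : IsOpen U) (hpt : pt ∈ U)
    {K a : ℝ} (hu : ContDiffAt ℝ 2 u pt) (hz : ContDiffAt ℝ 2 z pt) (hz0 : 0 < z pt)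
    (h : ∀ q ∈ U, pdt z q + K * z q ^ a * pdx u q = 0) :
    pdx (pdt z) pt
      = -(K * (a * z pt ^ (a - 1) * pdx z pt * pdx u pt + z pt ^ a * pdx (pdx u) pt)) := by
  have hzt : DifferentiableAt ℝ (pdt z) pt := hz.differentiableAt_fderiv_apply _
  have hux : DifferentiableAt ℝ (pdx u) pt := hu.differentiableAt_fderiv_apply _
  have hasDeriv : HasFDerivAt (fun q => pdt z q + K * z q ^ a * pdx u q) _ pt :=
    hzt.hasFDerivAt.add ((((hz.differentiableAt two_ne_zero).hasFDerivAt.rpow_const (p := a)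
      (Or.inl hz0.ne')).const_mul K).mul hux.hasFDerivAt)
  have := congrArg (· ((0 : ℝ), (1 : ℝ))) (fderiv_eq_zero_of_forall_mem_eq_zero hU hpt h)
  rw [hasDeriv.fderiv] at this
  simp only [add_apply, smul_apply, smul_eq_mul, zero_apply] at this
  unfold pdx at this ⊢
  linear_combination this

theorem pdx_pdt_eq_of_forall_pdt_add_mul_sq_mul_rpow_mul_pdx_add_eq_zero (hU : IsOpen U)
    (hpt : pt ∈ U) {A B a b : ℝ} (hu : ContDiffAt ℝ 2 u pt) (hz : ContDiffAt ℝ 2 z pt)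
    (hm : ContDiffAt ℝ 2 m pt) (hz0 : 0 < z pt)
    (h : ∀ q ∈ U, pdt u q + A * m q ^ 2 * z q ^ a * pdx z q + B * m q * z q ^ b * pdx m q = 0) :
    pdx (pdt u) pt
      = -(A * (2 * m pt * pdx m pt * z pt ^ a * pdx z pt
            + m pt ^ 2 * (a * z pt ^ (a - 1) * pdx z pt) * pdx z pt
            + m pt ^ 2 * z pt ^ a * pdx (pdx z) pt)
        + B * (pdx m pt * z pt ^ b * pdx m pt
            + m pt * (b * z pt ^ (b - 1) * pdx z pt) * pdx m pt
            + m pt * z pt ^ b * pdx (pdx m) pt)) := by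
  have hut : DifferentiableAt ℝ (pdt u) pt := hu.differentiableAt_fderiv_apply _
  have hzx : DifferentiableAt ℝ (pdx z) pt := hz.differentiableAt_fderiv_apply _
  have hmx : DifferentiableAt ℝ (pdx m) pt := hm.differentiableAt_fderiv_apply _
  have hzd := (hz.differentiableAt two_ne_zero).hasFDerivAt
  have hmd := (hm.differentiableAt two_ne_zero).hasFDerivAt
  have hasDeriv : HasFDerivAt
      (fun q => pdt u q + A * m q ^ 2 * z q ^ a * pdx z q + B * m q * z q ^ b * pdx m q) _ pt :=
    (hut.hasFDerivAt.add ((((hmd.pow 2).const_mul A).mul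
      (hzd.rpow_const (p := a) (Or.inl hz0.ne'))).mul hzx.hasFDerivAt)).add
      (((hmd.const_mul B).mul (hzd.rpow_const (p := b) (Or.inl hz0.ne'))).mul hmx.hasFDerivAt)
  have := congrArg (· ((0 : ℝ), (1 : ℝ))) (fderiv_eq_zero_of_forall_mem_eq_zero hU hpt h)
  rw [hasDeriv.fderiv] at this
  simp only [add_apply, smul_apply, smul_eq_mul, zero_apply, Pi.mul_apply, nsmul_eq_mul] at this
  unfold pdx at this ⊢
  linear_combination this

end EulerSystem

theorem stmt_3_general
    (γ Kc : ℝ) (hγ : 1 < γ)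
    (U : Set (ℝ × ℝ)) (hU : IsOpen U)
    (u z m : ℝ × ℝ → ℝ)
    (hu : ContDiffOn ℝ 2 u U) (hz : ContDiffOn ℝ 2 z U) (hm : ContDiffOn ℝ 2 m U)
    (hzpos : ∀ pt ∈ U, 0 < z pt) (hmpos : ∀ pt ∈ U, 0 < m pt)
    (c p : ℝ × ℝ → ℝ)
    (hc : c = fun pt => Kc * m pt * z pt ^ ((γ + 1) / (γ - 1)))
    (hp : p = fun pt => ((γ - 1) / (2 * γ) * Kc) * (m pt) ^ 2 * z pt ^ (2 * γ / (γ - 1)))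
    (heq1 : ∀ pt ∈ U, pdt z pt + (c pt / m pt) * pdx u pt = 0)
    (heq2 : ∀ pt ∈ U, pdt u pt + m pt * c pt * pdx z pt + 2 * (p pt / m pt) * pdx m pt = 0)
    (heq3 : ∀ pt ∈ U, pdt m pt = 0)
    (α β : ℝ × ℝ → ℝ)
    (hα : α = fun pt => pdx u pt + m pt * pdx z pt + ((γ - 1) / γ) * pdx m pt * z pt)
    (hβ : β = fun pt => pdx u pt - m pt * pdx z pt - ((γ - 1) / γ) * pdx m pt * z pt)
    (k1 k2 : ℝ × ℝ → ℝ)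
    (hk1 : k1 = fun pt => ((γ + 1) * Kc / (2 * (γ - 1))) * z pt ^ (2 / (γ - 1)))
    (hk2 : k2 = fun pt => ((γ - 1) / (γ * (γ + 1))) * z pt * pdx m pt)
 :
    ∀ pt ∈ U, pdt α pt + c pt * pdx α pt
      = k1 pt * (k2 pt * (3 * α pt + β pt) + α pt * β pt - (α pt) ^ 2) := by
  subst hc hp hα hβ hk1 hk2
  intro pt hpt
  have hγ1 : γ - 1 ≠ 0 := sub_ne_zero.2 hγ.ne'
  have hz0 := hzpos pt hpt
  replace hu := hu.contDiffAt (hU.mem_nhds hpt)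
  replace hz := hz.contDiffAt (hU.mem_nhds hpt)
  replace hm := hm.contDiffAt (hU.mem_nhds hpt)
  have hz_t : ∀ q ∈ U, pdt z q + Kc * z q ^ ((γ + 1) / (γ - 1)) * pdx u q = 0 := by
    intro q hq
    convert heq1 q hq using 3
    field_simp [(hmpos q hq).ne']
  have hu_t : ∀ q ∈ U, pdt u q + Kc * m q ^ 2 * z q ^ ((γ + 1) / (γ - 1)) * pdx z q
      + (γ - 1) / γ * Kc * m q * z q ^ (2 * γ / (γ - 1)) * pdx m q = 0 := by
    intro q hq
    convert heq2 q hq using 3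
    · ring
    · field_simp [(hmpos q hq).ne']
  have hm_xt : pdt (pdx m) pt = 0 := by
    rw [pdt_pdx_comm hm, pdx, fderiv_eq_zero_of_forall_mem_eq_zero hU hpt heq3, zero_apply]
  rw [pdt_pdx_add_mul_pdx_add_mul_pdx_mul _ hu hz hm,
    pdx_pdx_add_mul_pdx_add_mul_pdx_mul _ hu hz hm, pdt_pdx_comm hu, pdt_pdx_comm hz, hm_xt,
    heq3 pt hpt,
    pdx_pdt_eq_of_forall_pdt_add_mul_rpow_mul_pdx_eq_zero hU hpt hu hz hz0 hz_t,
    pdx_pdt_eq_of_forall_pdt_add_mul_sq_mul_rpow_mul_pdx_add_eq_zero hU hpt hu hz hm hz0 hu_t,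
    show pdt z pt = _ from eq_neg_of_add_eq_zero_left (hz_t pt hpt)]
  have hr : (γ + 1) / (γ - 1) = 2 / (γ - 1) + 1 := by field_simp; ring
  have hs : 2 * γ / (γ - 1) = 2 / (γ - 1) + 1 + 1 := by field_simp; ring
  simp only [hr, hs, add_sub_cancel_right, rpow_add_one hz0.ne']
  field_simp
  ring

/-- Theorem 1.1, equation for `α`:
`α′ = α_t + c·α_x = k₁·(k₂·(3α + β) + α·β − α²)` on `U`. -/
theorem stmt_3
    (γ Kc : ℝ) (hγ : 1 < γ) (hKc : 0 < Kc)
    (U : Set (ℝ × ℝ)) (hU : IsOpen U)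
    (u z m : ℝ × ℝ → ℝ)
    (hu : ContDiffOn ℝ 2 u U) (hz : ContDiffOn ℝ 2 z U) (hm : ContDiffOn ℝ 2 m U)
    (hzpos : ∀ pt ∈ U, 0 < z pt) (hmpos : ∀ pt ∈ U, 0 < m pt)
    (c p : ℝ × ℝ → ℝ)
    (hc : c = fun pt => Kc * m pt * z pt ^ ((γ + 1) / (γ - 1)))
    (hp : p = fun pt => ((γ - 1) / (2 * γ) * Kc) * (m pt) ^ 2 * z pt ^ (2 * γ / (γ - 1)))
    (heq1 : ∀ pt ∈ U, pdt z pt + (c pt / m pt) * pdx u pt = 0)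
    (heq2 : ∀ pt ∈ U, pdt u pt + m pt * c pt * pdx z pt + 2 * (p pt / m pt) * pdx m pt = 0)
    (heq3 : ∀ pt ∈ U, pdt m pt = 0)
    (α β : ℝ × ℝ → ℝ)
    (hα : α = fun pt => pdx u pt + m pt * pdx z pt + ((γ - 1) / γ) * pdx m pt * z pt)
    (hβ : β = fun pt => pdx u pt - m pt * pdx z pt - ((γ - 1) / γ) * pdx m pt * z pt)
    (k1 k2 : ℝ × ℝ → ℝ)
    (hk1 : k1 = fun pt => ((γ + 1) * Kc / (2 * (γ - 1))) * z pt ^ (2 / (γ - 1)))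
    (hk2 : k2 = fun pt => ((γ - 1) / (γ * (γ + 1))) * z pt * pdx m pt)
 :
    ∀ pt ∈ U, pdt α pt + c pt * pdx α pt
      = k1 pt * (k2 pt * (3 * α pt + β pt) + α pt * β pt - (α pt) ^ 2) :=
  stmt_3_general γ Kc hγ U hU u z m hu hz hm hzpos hmpos c p hc hp heq1 heq2 heq3 α β hα hβ k1 k2
    hk1 hk2
end

section
/- At every point of U, the characteristic derivatives of z satisfy z_t + c·z_x = −K_c·z^((γ+1)/(γ−1))·( β + ((γ−1)/γ)·m_x·z ) and z_t − c·z_x = −K_c·z^((γ+1)/(γ−1))·( α − ((γ−1)/γ)·m_x·z ). -/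
open Real

/-- Characteristic derivatives of `z`:
`z′ = −K_c·z^((γ+1)/(γ−1))·(β + ((γ−1)/γ)·m_x·z)` and
`z‵ = −K_c·z^((γ+1)/(γ−1))·(α − ((γ−1)/γ)·m_x·z)` on `U`. -/
theorem stmt_6
    (γ Kc : ℝ) (hγ : 1 < γ) (hKc : 0 < Kc)
    (U : Set (ℝ × ℝ)) (hU : IsOpen U)
    (u z m : ℝ × ℝ → ℝ)
    (hu : ContDiffOn ℝ 2 u U) (hz : ContDiffOn ℝ 2 z U) (hm : ContDiffOn ℝ 2 m U)
    (hzpos : ∀ pt ∈ U, 0 < z pt) (hmpos : ∀ pt ∈ U, 0 < m pt)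
    (c p : ℝ × ℝ → ℝ)
    (hc : c = fun pt => Kc * m pt * z pt ^ ((γ + 1) / (γ - 1)))
    (hp : p = fun pt => ((γ - 1) / (2 * γ) * Kc) * (m pt) ^ 2 * z pt ^ (2 * γ / (γ - 1)))
    (heq1 : ∀ pt ∈ U, pdt z pt + (c pt / m pt) * pdx u pt = 0)
    (heq2 : ∀ pt ∈ U, pdt u pt + m pt * c pt * pdx z pt + 2 * (p pt / m pt) * pdx m pt = 0)
    (heq3 : ∀ pt ∈ U, pdt m pt = 0)
    (α β : ℝ × ℝ → ℝ)
    (hα : α = fun pt => pdx u pt + m pt * pdx z pt + ((γ - 1) / γ) * pdx m pt * z pt)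
    (hβ : β = fun pt => pdx u pt - m pt * pdx z pt - ((γ - 1) / γ) * pdx m pt * z pt)
 :
    ∀ pt ∈ U,
      pdt z pt + c pt * pdx z pt
        = -Kc * z pt ^ ((γ + 1) / (γ - 1)) * (β pt + ((γ - 1) / γ) * pdx m pt * z pt) ∧
      pdt z pt - c pt * pdx z pt
        = -Kc * z pt ^ ((γ + 1) / (γ - 1)) * (α pt - ((γ - 1) / γ) * pdx m pt * z pt) := by
  intro pt hpt
  have hm0 : m pt ≠ 0 := ne_of_gt (hmpos pt hpt)
  have h1 := heq1 pt hpt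
  have hzt : pdt z pt = -(c pt / m pt) * pdx u pt := by linarith
  subst hc hα hβ
  simp only at hzt ⊢
  constructor <;> rw [hzt] <;> field_simp <;> ring
end

section
/- Suppose there are constants 0 < Z_L ≤ Z_U and 0 < M_L ≤ M_U and M₃ > 0 such that Z_L ≤ z ≤ Z_U, M_L ≤ m ≤ M_U and |m_x| ≤ M₃ on U, and let (t₀,x₀) ∈ ℝ². Then the following are equivalent: (i) for every neighborhood V of (t₀,x₀), the function |u_x| + |τ_x| is unbounded on V ∩ U; (ii) for every neighborhood V of (t₀,x₀), the function |y| + |q| is unbounded on V ∩ U. (Corollary 6.1: |y| or |q| tends to infinity approaching a point if and only if |u_x| or |τ_x| does.) -/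
open Real

/-!
With the weight `w = m ^ a * z ^ b` (`a`, `b` the exponents in `y` and `ỹ`), the definitions
give `y + q = 2 w u_x` and `y - q = 2 w m z_x` plus a constant multiple of `w z m_x`, while
`τ_x = K_τ e z ^ (e - 1) z_x` with `e = -2 / (γ - 1) ≠ 0`. The bounds on `z` and `m` keep `w`,
`w m`, `w z` and `z ^ (e - 1)` between positive constants and `m_x` is bounded, so near any point
each of `|y| + |q|` and `|u_x| + |τ_x|` is bounded exactly when `u_x` and `z_x` are.
-/

open Filter Topology Set Asymptotics

section FilterBounds

variable {α : Type*} {l : Filter α}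

lemma isBigO_and_isBigO_iff_add_sub {E F : Type*} [NormedAddCommGroup E] [NormedSpace ℝ E]
    [Norm F] {f g : α → E} {k : α → F} :
    (f =O[l] k ∧ g =O[l] k) ↔
      ((fun x => f x + g x) =O[l] k ∧ (fun x => f x - g x) =O[l] k) := by
  refine ⟨fun ⟨hf, hg⟩ => ⟨hf.add hg, hf.sub hg⟩, fun ⟨hs, hd⟩ => ⟨?_, ?_⟩⟩
  · refine ((hs.add hd).const_smul_left (2⁻¹ : ℝ)).congr_left fun x => ?_
    simp only [Pi.smul_apply]
    module
  · refine ((hs.sub hd).const_smul_left (2⁻¹ : ℝ)).congr_left fun x => ?_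
    simp only [Pi.smul_apply]
    module

lemma isTheta_one_of_mem_Icc {f : α → ℝ} {lo hi : ℝ} (hlo : 0 < lo)
    (hf : ∀ᶠ x in l, f x ∈ Icc lo hi) : f =Θ[l] fun _ => (1 : ℝ) := by
  refine ⟨IsBigO.of_bound hi (hf.mono fun x hx => ?_),
    IsBigO.of_bound lo⁻¹ (hf.mono fun x hx => ?_)⟩
  · simpa [abs_of_pos (hlo.trans_le hx.1)] using hx.2
  · rw [norm_one, Real.norm_of_nonneg (hlo.le.trans hx.1), ← div_eq_inv_mul, one_le_div hlo]
    exact hx.1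

lemma isTheta_one_rpow_of_mem_Icc {f : α → ℝ} {lo hi : ℝ} (hlo : 0 < lo)
    (hf : ∀ᶠ x in l, f x ∈ Icc lo hi) (s : ℝ) : (fun x => f x ^ s) =Θ[l] fun _ => (1 : ℝ) := by
  simpa using (isTheta_one_of_mem_Icc hlo hf).rpow (r := s)
    (hf.mono fun x hx => hlo.le.trans hx.1) (Eventually.of_forall fun _ => zero_le_one)

lemma isTheta_mul_self_of_isTheta_one {𝕜 : Type*} [NormedField 𝕜] {w : α → 𝕜}
    (hw : w =Θ[l] fun _ => (1 : 𝕜)) (f : α → 𝕜) : (fun x => w x * f x) =Θ[l] f := by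
  simpa using hw.mul (isTheta_refl f l)

lemma isBoundedUnder_abs_add_abs_iff {f g : α → ℝ} :
    IsBoundedUnder (· ≤ ·) l (fun x => |f x| + |g x|) ↔
      (f =O[l] (fun _ => (1 : ℝ)) ∧ g =O[l] fun _ => (1 : ℝ)) := by
  simp only [isBigO_one_iff, Real.norm_eq_abs]
  refine ⟨fun h => ⟨h.mono_le ?_, h.mono_le ?_⟩, fun ⟨hf, hg⟩ => isBoundedUnder_le_add hf hg⟩ <;>
    refine Eventually.of_forall fun x => ?_
  exacts [le_add_of_nonneg_right (abs_nonneg _), le_add_of_nonneg_left (abs_nonneg _)]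

theorem isBigO_one_and_iff_of_add_sub {a b c y q w v r : α → ℝ}
    (hc : c =Θ[l] b) (hw : w =Θ[l] fun _ => (1 : ℝ)) (hv : v =Θ[l] fun _ => (1 : ℝ))
    (hr : r =O[l] fun _ => (1 : ℝ))
    (hadd : ∀ᶠ x in l, y x + q x = 2 * w x * a x)
    (hsub : ∀ᶠ x in l, y x - q x = 2 * v x * b x + r x) :
    (a =O[l] (fun _ => (1 : ℝ)) ∧ c =O[l] fun _ => (1 : ℝ)) ↔
      (y =O[l] (fun _ => (1 : ℝ)) ∧ q =O[l] fun _ => (1 : ℝ)) := by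
  have hw2 := isTheta_mul_self_of_isTheta_one ((isTheta_const_mul_left two_ne_zero).2 hw) a
  have hv2 := isTheta_mul_self_of_isTheta_one ((isTheta_const_mul_left two_ne_zero).2 hv) b
  rw [isBigO_and_isBigO_iff_add_sub (f := y), isBigO_congr hadd EventuallyEq.rfl,
    isBigO_congr hsub EventuallyEq.rfl, hr.add_iff_left, hw2.isBigO_congr_left,
    hv2.isBigO_congr_left, hc.isBigO_congr_left]

end FilterBounds

lemma forall_nhds_not_exists_le_iff {X β : Type*} [TopologicalSpace X] [Preorder β]
    {F : X → β} {s : Set X} {a : X} :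
    (∀ V ∈ 𝓝 a, ¬ ∃ C : β, ∀ x ∈ V ∩ s, F x ≤ C) ↔ ¬ IsBoundedUnder (· ≤ ·) (𝓝[s] a) F := by
  have hev (C : β) : (∀ᶠ x in 𝓝[s] a, F x ≤ C) ↔ ∃ V ∈ 𝓝 a, ∀ x ∈ V ∩ s, F x ≤ C := by
    simp [Filter.Eventually, mem_nhdsWithin_iff_exists_mem_nhds_inter, subset_def]
  simp only [IsBoundedUnder, IsBounded, eventually_map, hev]
  exact ⟨fun h ⟨C, V, hV, hC⟩ => h V hV ⟨C, hC⟩, fun h V hV ⟨C, hC⟩ => h ⟨C, V, hV, hC⟩⟩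

lemma pdx_const_mul_rpow {f : ℝ × ℝ → ℝ} {pt : ℝ × ℝ} (hf : DifferentiableAt ℝ f pt)
    (hpt : f pt ≠ 0) (K s : ℝ) :
    pdx (fun q => K * f q ^ s) pt = K * s * (f pt ^ (s - 1) * pdx f pt) := by
  have h := (hf.hasFDerivAt.rpow_const (p := s) (Or.inl hpt)).const_mul K
  simp only [pdx, h.fderiv, smul_apply, smul_eq_mul]
  ring

lemma isTheta_pdx_const_mul_rpow {l : Filter (ℝ × ℝ)} {f : ℝ × ℝ → ℝ} {K s lo hi : ℝ}
    (hK : K ≠ 0) (hs : s ≠ 0) (hlo : 0 < lo)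
    (hf : ∀ᶠ pt in l, DifferentiableAt ℝ f pt ∧ f pt ∈ Icc lo hi) :
    pdx (fun pt => K * f pt ^ s) =Θ[l] pdx f := by
  have hfI : ∀ᶠ pt in l, f pt ∈ Icc lo hi := hf.mono fun _ h => h.2
  have hpdx : pdx (fun pt => K * f pt ^ s) =ᶠ[l] fun pt => K * s * (f pt ^ (s - 1) * pdx f pt) :=
    hf.mono fun pt h => pdx_const_mul_rpow h.1 (hlo.trans_le h.2.1).ne' K s
  exact hpdx.isTheta.trans ((isTheta_const_mul_left (mul_ne_zero hK hs)).2
    (isTheta_mul_self_of_isTheta_one (isTheta_one_rpow_of_mem_Icc hlo hfI (s - 1)) (pdx f)))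

theorem stmt_11_general
    (γ : ℝ) (hγ : 1 < γ)
    (U : Set (ℝ × ℝ)) (hU : IsOpen U)
    (u z m : ℝ × ℝ → ℝ)
    (hz : ContDiffOn ℝ 2 z U)
    (α β : ℝ × ℝ → ℝ)
    (hα : α = fun pt => pdx u pt + m pt * pdx z pt + ((γ - 1) / γ) * pdx m pt * z pt)
    (hβ : β = fun pt => pdx u pt - m pt * pdx z pt - ((γ - 1) / γ) * pdx m pt * z pt)
    (yt qt : ℝ × ℝ → ℝ)
    (hyt : yt = fun pt => z pt ^ ((γ + 1) / (2 * (γ - 1))) * α pt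
      + ((γ - 1) / (γ * (3 * γ - 1))) * z pt ^ ((γ + 1) / (2 * (γ - 1)) + 1) * pdx m pt)
    (hqt : qt = fun pt => z pt ^ ((γ + 1) / (2 * (γ - 1))) * β pt
      - ((γ - 1) / (γ * (3 * γ - 1))) * z pt ^ ((γ + 1) / (2 * (γ - 1)) + 1) * pdx m pt)
    (yf qf : ℝ × ℝ → ℝ)
    (hyf : yf = fun pt => m pt ^ (-(3 * (3 - γ)) / (2 * (3 * γ - 1))) * yt pt)
    (hqf : qf = fun pt => m pt ^ (-(3 * (3 - γ)) / (2 * (3 * γ - 1))) * qt pt)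
    (Kτ : ℝ) (hKτ : 0 < Kτ)
    (τ : ℝ × ℝ → ℝ) (hτ : τ = fun pt => Kτ * z pt ^ (-2 / (γ - 1)))
    (ZL ZU ML MU M3 : ℝ) (hZL : 0 < ZL) (hML : 0 < ML)
    (hzb : ∀ pt ∈ U, ZL ≤ z pt ∧ z pt ≤ ZU)
    (hmb : ∀ pt ∈ U, ML ≤ m pt ∧ m pt ≤ MU)
    (hmxb : ∀ pt ∈ U, |pdx m pt| ≤ M3)
    (t₀ x₀ : ℝ) :
    (∀ V ∈ nhds ((t₀, x₀) : ℝ × ℝ), ¬ ∃ C : ℝ, ∀ pt ∈ V ∩ U, |pdx u pt| + |pdx τ pt| ≤ C) ↔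
      (∀ V ∈ nhds ((t₀, x₀) : ℝ × ℝ), ¬ ∃ C : ℝ, ∀ pt ∈ V ∩ U, |yf pt| + |qf pt| ≤ C) := by
  set l := 𝓝[U] ((t₀, x₀) : ℝ × ℝ)
  set a := -(3 * (3 - γ)) / (2 * (3 * γ - 1))
  set b := (γ + 1) / (2 * (γ - 1))
  set K := (γ - 1) / γ + (γ - 1) / (γ * (3 * γ - 1))
  have hUl : ∀ᶠ pt in l, pt ∈ U := self_mem_nhdsWithin
  have hzI : ∀ᶠ pt in l, z pt ∈ Icc ZL ZU := hUl.mono hzb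
  have hmI : ∀ᶠ pt in l, m pt ∈ Icc ML MU := hUl.mono hmb
  have hw : (fun pt => m pt ^ a * z pt ^ b) =Θ[l] fun _ => (1 : ℝ) := by
    simpa using (isTheta_one_rpow_of_mem_Icc hML hmI a).mul (isTheta_one_rpow_of_mem_Icc hZL hzI b)
  have hwm : (fun pt => m pt ^ a * z pt ^ b * m pt) =Θ[l] fun _ => (1 : ℝ) := by
    simpa using hw.mul (isTheta_one_of_mem_Icc hML hmI)
  have hr : (fun pt => 2 * K * (m pt ^ a * z pt ^ b * z pt) * pdx m pt) =O[l] fun _ => (1 : ℝ) := by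
    have hmx : pdx m =O[l] fun _ => (1 : ℝ) :=
      IsBigO.of_bound M3 (hUl.mono fun pt h => by simpa using hmxb pt h)
    simpa [mul_assoc] using
      ((hw.mul (isTheta_one_of_mem_Icc hZL hzI)).isBigO.mul hmx).const_mul_left (2 * K)
  have hτz : pdx τ =Θ[l] pdx z := hτ ▸ isTheta_pdx_const_mul_rpow hKτ.ne'
    (div_ne_zero (by norm_num) (sub_pos.2 hγ).ne') hZL (hUl.mono fun pt h =>
      ⟨(hz.contDiffAt (hU.mem_nhds h)).differentiableAt two_ne_zero, hzb pt h⟩)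
  have hadd : ∀ᶠ pt in l, yf pt + qf pt = 2 * (m pt ^ a * z pt ^ b) * pdx u pt :=
    Eventually.of_forall fun pt => by simp only [hyf, hqf, hyt, hqt, hα, hβ]; ring
  have hsub : ∀ᶠ pt in l, yf pt - qf pt = 2 * (m pt ^ a * z pt ^ b * m pt) * pdx z pt
      + 2 * K * (m pt ^ a * z pt ^ b * z pt) * pdx m pt := hzI.mono fun pt h => by
    simp only [hyf, hqf, hyt, hqt, hα, hβ, rpow_add_one (hZL.trans_le h.1).ne']
    ring
  rw [forall_nhds_not_exists_le_iff, forall_nhds_not_exists_le_iff,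
    isBoundedUnder_abs_add_abs_iff, isBoundedUnder_abs_add_abs_iff]
  exact not_congr (isBigO_one_and_iff_of_add_sub hτz hw hwm hr hadd hsub)

/-- Corollary 6.1: under uniform bounds on `z`, `m`, `m_x`,
`|u_x| + |τ_x|` is unbounded near a point iff `|y| + |q|` is. -/
theorem stmt_11
    (γ Kc : ℝ) (hγ : 1 < γ) (hKc : 0 < Kc)
    (U : Set (ℝ × ℝ)) (hU : IsOpen U)
    (u z m : ℝ × ℝ → ℝ)
    (hu : ContDiffOn ℝ 2 u U) (hz : ContDiffOn ℝ 2 z U) (hm : ContDiffOn ℝ 2 m U)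
    (hzpos : ∀ pt ∈ U, 0 < z pt) (hmpos : ∀ pt ∈ U, 0 < m pt)
    (c p : ℝ × ℝ → ℝ)
    (hc : c = fun pt => Kc * m pt * z pt ^ ((γ + 1) / (γ - 1)))
    (hp : p = fun pt => ((γ - 1) / (2 * γ) * Kc) * (m pt) ^ 2 * z pt ^ (2 * γ / (γ - 1)))
    (heq1 : ∀ pt ∈ U, pdt z pt + (c pt / m pt) * pdx u pt = 0)
    (heq2 : ∀ pt ∈ U, pdt u pt + m pt * c pt * pdx z pt + 2 * (p pt / m pt) * pdx m pt = 0)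
    (heq3 : ∀ pt ∈ U, pdt m pt = 0)
    (α β : ℝ × ℝ → ℝ)
    (hα : α = fun pt => pdx u pt + m pt * pdx z pt + ((γ - 1) / γ) * pdx m pt * z pt)
    (hβ : β = fun pt => pdx u pt - m pt * pdx z pt - ((γ - 1) / γ) * pdx m pt * z pt)
    (yt qt : ℝ × ℝ → ℝ)
    (hyt : yt = fun pt => z pt ^ ((γ + 1) / (2 * (γ - 1))) * α pt
      + ((γ - 1) / (γ * (3 * γ - 1))) * z pt ^ ((γ + 1) / (2 * (γ - 1)) + 1) * pdx m pt)
    (hqt : qt = fun pt => z pt ^ ((γ + 1) / (2 * (γ - 1))) * β pt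
      - ((γ - 1) / (γ * (3 * γ - 1))) * z pt ^ ((γ + 1) / (2 * (γ - 1)) + 1) * pdx m pt)
    (yf qf : ℝ × ℝ → ℝ)
    (hyf : yf = fun pt => m pt ^ (-(3 * (3 - γ)) / (2 * (3 * γ - 1))) * yt pt)
    (hqf : qf = fun pt => m pt ^ (-(3 * (3 - γ)) / (2 * (3 * γ - 1))) * qt pt)
    (Kτ : ℝ) (hKτ : 0 < Kτ)
    (τ : ℝ × ℝ → ℝ) (hτ : τ = fun pt => Kτ * z pt ^ (-2 / (γ - 1)))
    (ZL ZU ML MU M3 : ℝ) (hZL : 0 < ZL) (hZLU : ZL ≤ ZU) (hML : 0 < ML) (hMLU : ML ≤ MU)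
    (hM3 : 0 < M3)
    (hzb : ∀ pt ∈ U, ZL ≤ z pt ∧ z pt ≤ ZU)
    (hmb : ∀ pt ∈ U, ML ≤ m pt ∧ m pt ≤ MU)
    (hmxb : ∀ pt ∈ U, |pdx m pt| ≤ M3)
    (t₀ x₀ : ℝ) :
    (∀ V ∈ nhds ((t₀, x₀) : ℝ × ℝ), ¬ ∃ C : ℝ, ∀ pt ∈ V ∩ U, |pdx u pt| + |pdx τ pt| ≤ C) ↔
      (∀ V ∈ nhds ((t₀, x₀) : ℝ × ℝ), ¬ ∃ C : ℝ, ∀ pt ∈ V ∩ U, |yf pt| + |qf pt| ≤ C) :=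
  stmt_11_general γ hγ U hU u z m hz α β hα hβ yt qt hyt hqt yf qf hyf hqf Kτ hKτ τ hτ ZL ZU ML MU
    M3 hZL hML hzb hmb hmxb t₀ x₀
end
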